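/- For fixed x ∈ ℂ \ ℝ₊, the functions e_c^{(h)+}(x) := h^c · Γ(1 + c - x/h)/Γ(1 - x/h) converge to (-x)^c as h → 0⁺, where (-x)^c uses the principal branch, uniformly for c in closed disks. -/

import Mathlib

/-!
Put `u = -x` and `w = u / h`, so that
`h ^ c Γ(1 + c - x/h) / Γ(1 - x/h) = u ^ c · Γ(w + 1 + c) / (Γ(w + 1) w ^ c)`.
As `h → 0⁺`, `w` runs to infinity along the ray through `u`. Since `u` is off the negative real
axis, that ray stays in a sector: `‖w + t‖ ≥ δ (‖w‖ + t)` for `t ≥ 0`, where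
`δ = cos (arg u / 2) > 0`.

By Euler's limit formula, `Γ(w + 1 + c) / (Γ(w + 1) w ^ c)` is the limit as `n → ∞` of
`exp (c log (1 + 1/w) + ∑_{j ≤ n} (c log (1 + 1/b_j) - log (1 + c/b_j)))`, `b_j = w + 1 + j`.
Each summand is `O(1/‖b_j‖²)`, so the sector bound makes the exponent `O(1/‖w‖) = O(h)`,
uniformly for `‖c‖ ≤ R`.
-/

open Filter Topology Finset

lemma sum_range_inv_add_succ_sq_le {τ : ℝ} (hτ : 0 < τ) (n : ℕ) :
    ∑ j ∈ range n, ((τ + (j + 1)) ^ 2)⁻¹ ≤ τ⁻¹ := by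
  have hterm (j : ℕ) : ((τ + (j + 1)) ^ 2)⁻¹ ≤ (τ + j)⁻¹ - (τ + (j + 1 : ℕ))⁻¹ := by
    have h0 : 0 < τ + j := by positivity
    have h1 : 0 < τ + (j + 1) := by positivity
    push_cast
    rw [inv_sub_inv h0.ne' h1.ne', show τ + (j + 1) - (τ + j) = 1 by ring, one_div]
    gcongr
    nlinarith
  calc ∑ j ∈ range n, ((τ + (j + 1)) ^ 2)⁻¹
      ≤ ∑ j ∈ range n, ((τ + j)⁻¹ - (τ + (j + 1 : ℕ))⁻¹) := sum_le_sum fun j _ => hterm j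
    _ = τ⁻¹ - (τ + n)⁻¹ := by rw [sum_range_sub' (fun j : ℕ => (τ + j)⁻¹)]; simp
    _ ≤ τ⁻¹ := by linarith [inv_pos.mpr (by positivity : 0 < τ + n)]

lemma tendstoUniformlyOn_of_eventually_dist_le {ι α β : Type*} [PseudoMetricSpace β]
    {F : ι → α → β} {f : α → β} {l : Filter ι} {s : Set α} {b : ι → ℝ}
    (hb : Tendsto b l (𝓝 0)) (hF : ∀ᶠ i in l, ∀ x ∈ s, dist (f x) (F i x) ≤ b i) :
    TendstoUniformlyOn F f l s := by
  rw [Metric.tendstoUniformlyOn_iff]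
  intro ε hε
  filter_upwards [hF, hb.eventually (gt_mem_nhds hε)] with i hi hbi x hx
  exact (hi x hx).trans_lt hbi

namespace Complex

lemma cos_arg_div_two_mul_le_norm_add_ofReal (u : ℂ) (t : ℝ) :
    Real.cos (arg u / 2) * (‖u‖ + t) ≤ ‖u + t‖ := by
  have hre : u.re = ‖u‖ * Real.cos (arg u) := (norm_mul_cos_arg u).symm
  have hnorm : ‖u + t‖ ^ 2 = ‖u‖ ^ 2 + 2 * t * u.re + t ^ 2 := by
    rw [Complex.sq_norm, Complex.sq_norm, normSq_apply, normSq_apply]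
    simp only [add_re, ofReal_re, add_im, ofReal_im, add_zero]
    ring
  have hhalf : Real.cos (arg u / 2) ^ 2 = (1 + Real.cos (arg u)) / 2 := by
    rw [Real.cos_sq]; ring_nf
  -- the difference of the squares is `(1 - cos (arg u)) / 2 * (‖u‖ - t) ^ 2`
  have hsq : (Real.cos (arg u / 2) * (‖u‖ + t)) ^ 2 ≤ ‖u + t‖ ^ 2 := by
    rw [mul_pow, hhalf, hnorm, hre]
    nlinarith [mul_nonneg (sub_nonneg.mpr (Real.cos_le_one (arg u))) (sq_nonneg (‖u‖ - t))]
  exact (abs_le_of_sq_le_sq' hsq (norm_nonneg _)).2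

lemma cos_arg_div_two_pos {u : ℂ} (hu : u ∈ slitPlane) : 0 < Real.cos (arg u / 2) := by
  apply Real.cos_pos_of_mem_Ioo
  have := neg_pi_lt_arg u
  have := (arg_le_pi u).lt_of_ne (slitPlane_arg_ne_pi hu)
  constructor <;> linarith

lemma arg_div_ofReal (u : ℂ) {h : ℝ} (hh : 0 < h) : arg (u / h) = arg u := by
  rw [div_eq_inv_mul, ← ofReal_inv, arg_real_mul u (inv_pos.mpr hh)]

lemma div_ofReal_cpow {u : ℂ} (hu : u ≠ 0) {h : ℝ} (hh : 0 < h) (c : ℂ) :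
    (u / h) ^ c = u ^ c / (h : ℂ) ^ c := by
  have hh' : (h : ℂ) ≠ 0 := ofReal_ne_zero.mpr hh.ne'
  rw [cpow_def_of_ne_zero (div_ne_zero hu hh'), cpow_def_of_ne_zero hu, cpow_def_of_ne_zero hh',
    ← exp_sub, div_eq_inv_mul, ← ofReal_inv, log_ofReal_mul (inv_pos.mpr hh) hu,
    ← ofReal_log hh.le, Real.log_inv]
  push_cast
  ring_nf

/-- No branch correction occurs: `1 + z⁻¹` has nonnegative real part and an imaginary part of
sign opposite to that of `z`, so the arguments of the two factors of `z * (1 + z⁻¹)` add up to a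
number in `(-π, π]`. -/
lemma log_add_one_eq_log_add_log_one_add_inv {z : ℂ} (hz : 1 < ‖z‖) :
    log (z + 1) = log z + log (1 + z⁻¹) := by
  have hz0 : z ≠ 0 := norm_pos_iff.mp (one_pos.trans hz)
  have hinv : ‖z⁻¹‖ < 1 := by rw [norm_inv]; exact inv_lt_one_of_one_lt₀ hz
  have hre : 0 ≤ (1 + z⁻¹).re := by
    rw [add_re, one_re]; linarith [neg_abs_le z⁻¹.re, abs_re_le_norm z⁻¹]
  have hy0 : 1 + z⁻¹ ≠ 0 := fun h => by simp [eq_neg_of_add_eq_zero_right h] at hinv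
  have hsin := arg_of_re_nonneg hre
  have him : (1 + z⁻¹).im = -z.im / normSq z := by simp [inv_im]
  have hnsq : 0 ≤ normSq z := normSq_nonneg z
  rw [show z + 1 = z * (1 + z⁻¹) by field_simp, log_mul_eq_add_log_iff hz0 hy0]
  rcases le_or_gt 0 z.im with h | h
  · have : arg (1 + z⁻¹) ≤ 0 := by
      rw [hsin, Real.arcsin_nonpos, him]
      exact div_nonpos_of_nonpos_of_nonneg (div_nonpos_of_nonpos_of_nonneg (by linarith) hnsq)
        (norm_nonneg _)
    constructor <;> linarith [arg_nonneg_iff.mpr h, arg_le_pi z, neg_pi_lt_arg (1 + z⁻¹)]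
  · have : 0 ≤ arg (1 + z⁻¹) := by
      rw [hsin, Real.arcsin_nonneg, him]
      exact div_nonneg (div_nonneg (by linarith) hnsq) (norm_nonneg _)
    constructor <;> linarith [arg_neg_iff.mpr h, neg_pi_lt_arg z, arg_le_pi (1 + z⁻¹)]

lemma sum_range_log_one_add_inv {w : ℂ} (hw : ∀ j : ℕ, 1 < ‖w + j‖) (m : ℕ) :
    ∑ j ∈ range m, log (1 + (w + j)⁻¹) = log (w + m) - log w := by
  have := sum_range_sub (fun j : ℕ => log (w + j)) m
  simp only [Nat.cast_add, Nat.cast_one, Nat.cast_zero, add_zero] at this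
  rw [← this]
  refine sum_congr rfl fun j _ => ?_
  rw [← add_assoc, log_add_one_eq_log_add_log_one_add_inv (hw j)]
  ring

lemma tendsto_log_natCast_add_sub_log (a : ℂ) :
    Tendsto (fun n : ℕ => log (n + a) - log n) atTop (𝓝 0) := by
  have hsmall : Tendsto (fun n : ℕ => a / n) atTop (𝓝 0) := by
    simpa using tendsto_const_div_atTop_nhds_zero_nat a
  have hlog : Tendsto (fun n : ℕ => log (1 + a / n)) atTop (𝓝 0) := by
    have hone : Tendsto (fun n : ℕ => 1 + a / n) atTop (𝓝 1) := by
      simpa using hsmall.const_add 1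
    simpa [Function.comp_def] using (continuousAt_clog one_mem_slitPlane).tendsto.comp hone
  refine hlog.congr' ?_
  filter_upwards [eventually_ne_atTop 0,
    hsmall.norm.eventually (gt_mem_nhds (show ‖(0 : ℂ)‖ < 1 by simp))] with n hn ha
  have hne : 1 + a / n ≠ 0 := fun h => by simp [eq_neg_of_add_eq_zero_right h] at ha
  have hmul : ((n : ℝ) : ℂ) * (1 + a / n) = n + a := by push_cast; field_simp
  rw [← hmul, log_ofReal_mul (Nat.cast_pos.mpr (Nat.pos_of_ne_zero hn)) hne, natCast_log]
  ring

lemma norm_log_one_add_sub_self_le_sq {z : ℂ} (hz : ‖z‖ ≤ 1 / 2) :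
    ‖log (1 + z) - z‖ ≤ ‖z‖ ^ 2 := by
  have h2 : (1 - ‖z‖)⁻¹ ≤ 2 := by
    rw [inv_le_comm₀ (by linarith) two_pos]; linarith
  calc ‖log (1 + z) - z‖ ≤ ‖z‖ ^ 2 * (1 - ‖z‖)⁻¹ / 2 :=
        norm_log_one_add_sub_self_le (hz.trans_lt (by norm_num))
    _ ≤ ‖z‖ ^ 2 * 2 / 2 := by gcongr
    _ = ‖z‖ ^ 2 := by ring

/-- The logarithm of the factor `(1 + b⁻¹) ^ c * (1 + c / b)⁻¹` of Euler's product for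
`Γ(1 + c)`, where `b` runs through the positive integers. -/
noncomputable def logEulerFactor (c b : ℂ) : ℂ :=
  c * log (1 + b⁻¹) - log (1 + c / b)

lemma norm_logEulerFactor_le {c b : ℂ} (hb : 2 ≤ ‖b‖) (hcb : 2 * ‖c‖ ≤ ‖b‖) :
    ‖logEulerFactor c b‖ ≤ (‖c‖ + ‖c‖ ^ 2) / ‖b‖ ^ 2 := by
  have hb0 : 0 < ‖b‖ := by linarith
  have hinv : ‖b⁻¹‖ ≤ 1 / 2 := by
    rw [norm_inv, one_div]; exact inv_anti₀ two_pos hb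
  have hdiv : ‖c / b‖ ≤ 1 / 2 := by
    rw [norm_div, div_le_iff₀ hb0]; linarith
  have hsplit : logEulerFactor c b
      = c * (log (1 + b⁻¹) - b⁻¹) - (log (1 + c / b) - c / b) := by
    rw [logEulerFactor, div_eq_mul_inv]; ring
  calc ‖logEulerFactor c b‖
      ≤ ‖c‖ * ‖log (1 + b⁻¹) - b⁻¹‖ + ‖log (1 + c / b) - c / b‖ := by
        rw [hsplit, ← norm_mul]; exact norm_sub_le _ _
    _ ≤ ‖c‖ * ‖b⁻¹‖ ^ 2 + ‖c / b‖ ^ 2 := by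
        gcongr
        exacts [norm_log_one_add_sub_self_le_sq hinv, norm_log_one_add_sub_self_le_sq hdiv]
    _ = (‖c‖ + ‖c‖ ^ 2) / ‖b‖ ^ 2 := by
        rw [norm_inv, norm_div]; field_simp

lemma GammaSeq_add_div_GammaSeq (s c : ℂ) {n : ℕ} (hn : n ≠ 0) :
    GammaSeq (s + c) n / GammaSeq s n = n ^ c * ∏ j ∈ range (n + 1), (s + j) / (s + j + c) := by
  have hn' : (n : ℂ) ≠ 0 := Nat.cast_ne_zero.mpr hn
  rw [GammaSeq, GammaSeq, cpow_add _ _ hn', prod_div_distrib]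
  simp_rw [add_right_comm s c]
  field_simp [cpow_ne_zero_iff, hn', Nat.factorial_ne_zero]

lemma GammaSeq_add_div_GammaSeq_div_cpow_eq_exp {w c : ℂ} {n : ℕ} (hn : n ≠ 0) (hw : w ≠ 0)
    (hc : ∀ j : ℕ, ‖c‖ < ‖w + 1 + j‖) :
    GammaSeq (w + 1 + c) n / GammaSeq (w + 1) n / w ^ c
      = exp (c * (log n - log w) - ∑ j ∈ range (n + 1), log (1 + c / (w + 1 + j))) := by
  have hb (j : ℕ) : w + 1 + j ≠ 0 := norm_pos_iff.mp ((norm_nonneg c).trans_lt (hc j))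
  have hfactor (j : ℕ) : (w + 1 + j) / (w + 1 + j + c) = exp (-log (1 + c / (w + 1 + j))) := by
    have hbc : w + 1 + j + c ≠ 0 := fun h => by
      have := hc j
      rw [eq_neg_of_add_eq_zero_left h, norm_neg] at this
      exact lt_irrefl _ this
    rw [exp_neg, one_add_div (hb j), exp_log (div_ne_zero hbc (hb j)), inv_div]
  rw [GammaSeq_add_div_GammaSeq _ c hn, prod_congr rfl fun j _ => hfactor j, ← exp_sum,
    cpow_def_of_ne_zero hw, cpow_def_of_ne_zero (Nat.cast_ne_zero.mpr hn), ← exp_add, ← exp_sub,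
    sum_neg_distrib]
  congr 1
  ring

lemma mul_log_sub_sum_log_one_add_div_eq {w : ℂ} (c : ℂ) (hw : ∀ j : ℕ, 1 < ‖w + j‖) (n : ℕ) :
    c * (log n - log w) - ∑ j ∈ range (n + 1), log (1 + c / (w + 1 + j))
      = -(c * (log (n + (w + 2)) - log n))
        + (c * log (1 + w⁻¹) + ∑ j ∈ range (n + 1), logEulerFactor c (w + 1 + j)) := by
  have htel := sum_range_log_one_add_inv hw (n + 2)
  rw [sum_range_succ'] at htel
  push_cast at htel
  simp only [add_zero, show ∀ x : ℂ, w + (x + 1) = w + 1 + x from fun x => by ring,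
    show w + (n + 2) = n + (w + 2) by ring] at htel
  simp only [logEulerFactor, sum_sub_distrib, ← mul_sum]
  linear_combination -c * htel

lemma norm_sum_logEulerFactor_le {w c : ℂ} {δ R : ℝ} (hδ : 0 < δ)
    (hw : ∀ t : ℝ, 0 ≤ t → δ * (‖w‖ + t) ≤ ‖w + t‖) (hc : ‖c‖ ≤ R)
    (hlarge : 2 * (R + 1) ≤ δ * ‖w‖) (n : ℕ) :
    ‖∑ j ∈ range n, logEulerFactor c (w + 1 + j)‖ ≤ (R + R ^ 2) / (δ ^ 2 * ‖w‖) := by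
  have hR : 0 ≤ R := (norm_nonneg c).trans hc
  have hN : 0 < ‖w‖ := pos_of_mul_pos_right (by linarith) hδ.le
  have hterm (j : ℕ) :
      ‖logEulerFactor c (w + 1 + j)‖ ≤ (R + R ^ 2) / δ ^ 2 * ((‖w‖ + (j + 1)) ^ 2)⁻¹ := by
    have hb : δ * (‖w‖ + (j + 1)) ≤ ‖w + 1 + j‖ := by
      have := hw (j + 1) (by positivity)
      rwa [show w + ((j + 1 : ℝ) : ℂ) = w + 1 + j by push_cast; ring] at this
    have hb2 : 2 * (R + 1) ≤ ‖w + 1 + j‖ := hlarge.trans (by nlinarith)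
    calc ‖logEulerFactor c (w + 1 + j)‖ ≤ (‖c‖ + ‖c‖ ^ 2) / ‖w + 1 + j‖ ^ 2 :=
          norm_logEulerFactor_le (by nlinarith) (by nlinarith)
      _ ≤ (R + R ^ 2) / (δ * (‖w‖ + (j + 1))) ^ 2 := by gcongr
      _ = (R + R ^ 2) / δ ^ 2 * ((‖w‖ + (j + 1)) ^ 2)⁻¹ := by field_simp
  calc ‖∑ j ∈ range n, logEulerFactor c (w + 1 + j)‖
      ≤ ∑ j ∈ range n, (R + R ^ 2) / δ ^ 2 * ((‖w‖ + (j + 1)) ^ 2)⁻¹ :=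
        norm_sum_le_of_le _ fun j _ => hterm j
    _ = (R + R ^ 2) / δ ^ 2 * ∑ j ∈ range n, ((‖w‖ + (j + 1)) ^ 2)⁻¹ := (mul_sum ..).symm
    _ ≤ (R + R ^ 2) / δ ^ 2 * ‖w‖⁻¹ := by gcongr; exact sum_range_inv_add_succ_sq_le hN n
    _ = (R + R ^ 2) / (δ ^ 2 * ‖w‖) := by field_simp

lemma norm_mul_log_one_add_inv_add_sum_logEulerFactor_le {w c : ℂ} {δ R : ℝ} (hδ : 0 < δ)
    (hw : ∀ t : ℝ, 0 ≤ t → δ * (‖w‖ + t) ≤ ‖w + t‖) (hc : ‖c‖ ≤ R)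
    (hlarge : 2 * (R + 1) ≤ δ * ‖w‖) (n : ℕ) :
    ‖c * log (1 + w⁻¹) + ∑ j ∈ range n, logEulerFactor c (w + 1 + j)‖
      ≤ 2 * (R + 1) ^ 2 / (δ ^ 2 * ‖w‖) := by
  have hR : 0 ≤ R := (norm_nonneg c).trans hc
  have hwpos : 0 < ‖w‖ := pos_of_mul_pos_right (by linarith) hδ.le
  have hδ1 : δ ≤ 1 := le_of_mul_le_mul_right (by simpa using hw 0 le_rfl) hwpos
  have hinv : ‖w⁻¹‖ ≤ 1 / 2 := by
    rw [norm_inv, one_div]; exact inv_anti₀ two_pos (by nlinarith)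
  calc ‖c * log (1 + w⁻¹) + ∑ j ∈ range n, logEulerFactor c (w + 1 + j)‖
      ≤ R * (3 / 2 * ‖w⁻¹‖) + (R + R ^ 2) / (δ ^ 2 * ‖w‖) := by
        refine (norm_add_le _ _).trans
          (add_le_add ?_ (norm_sum_logEulerFactor_le hδ hw hc hlarge n))
        rw [norm_mul]
        exact mul_le_mul hc (norm_log_one_add_half_le_self hinv) (norm_nonneg _) hR
    _ ≤ 3 / 2 * R / (δ ^ 2 * ‖w‖) + (R + R ^ 2) / (δ ^ 2 * ‖w‖) := by
        rw [norm_inv, ← mul_assoc, ← div_eq_mul_inv, mul_comm R]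
        gcongr
        nlinarith
    _ ≤ 2 * (R + 1) ^ 2 / (δ ^ 2 * ‖w‖) := by
        rw [← add_div]
        gcongr
        nlinarith

theorem norm_Gamma_add_div_Gamma_div_cpow_sub_one_le {w c : ℂ} {δ R : ℝ} (hδ : 0 < δ)
    (hw : ∀ t : ℝ, 0 ≤ t → δ * (‖w‖ + t) ≤ ‖w + t‖) (hc : ‖c‖ ≤ R)
    (hN : 2 * (R + 1) ^ 2 ≤ δ ^ 2 * ‖w‖) :
    ‖Gamma (w + 1 + c) / Gamma (w + 1) / w ^ c - 1‖ ≤ 4 * (R + 1) ^ 2 / (δ ^ 2 * ‖w‖) := by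
  have hR : 0 ≤ R := (norm_nonneg c).trans hc
  have hwpos : 0 < ‖w‖ := pos_of_mul_pos_right (by nlinarith) (sq_nonneg δ)
  have hδ1 : δ ≤ 1 := le_of_mul_le_mul_right (by simpa using hw 0 le_rfl) hwpos
  have hlarge : 2 * (R + 1) ≤ δ * ‖w‖ := by nlinarith
  have hwj (j : ℕ) : 2 * (R + 1) ≤ ‖w + j‖ :=
    (hlarge.trans (mul_le_mul_of_nonneg_left (le_add_of_nonneg_right j.cast_nonneg) hδ.le)).trans
      (by simpa using hw j j.cast_nonneg)
  have hwj' (j : ℕ) : 2 * (R + 1) ≤ ‖w + 1 + j‖ := by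
    simpa [add_assoc, add_comm (1 : ℂ)] using hwj (j + 1)
  have hΓ : Gamma (w + 1) ≠ 0 := Gamma_ne_zero fun m h => by
    have := hwj' m
    rw [h, neg_add_cancel, norm_zero] at this
    linarith
  set B := 2 * (R + 1) ^ 2 / (δ ^ 2 * ‖w‖)
  set S : ℕ → ℂ := fun n => c * log (1 + w⁻¹) + ∑ j ∈ range (n + 1), logEulerFactor c (w + 1 + j)
  have hS (n : ℕ) : ‖S n‖ ≤ B :=
    norm_mul_log_one_add_inv_add_sum_logEulerFactor_le hδ hw hc hlarge (n + 1)
  have hB : B ≤ 1 := by rw [div_le_one (by positivity)]; nlinarith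
  have hGamma : Tendsto (fun n => GammaSeq (w + 1 + c) n / GammaSeq (w + 1) n / w ^ c) atTop
      (𝓝 (Gamma (w + 1 + c) / Gamma (w + 1) / w ^ c)) :=
    ((GammaSeq_tendsto_Gamma _).div (GammaSeq_tendsto_Gamma _) hΓ).div_const _
  have hT : Tendsto (fun n : ℕ => exp (c * (log (n + (w + 2)) - log n))) atTop (𝓝 1) := by
    simpa using ((tendsto_log_natCast_add_sub_log (w + 2)).const_mul c).cexp
  have hexpS : Tendsto (fun n => exp (S n)) atTop
      (𝓝 (Gamma (w + 1 + c) / Gamma (w + 1) / w ^ c)) := by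
    refine (by simpa using hGamma.mul hT : Tendsto _ _ _).congr' ?_
    filter_upwards [eventually_ne_atTop 0] with n hn
    rw [GammaSeq_add_div_GammaSeq_div_cpow_eq_exp hn (norm_pos_iff.mp hwpos)
      (fun j => hc.trans_lt ((by linarith : R < 2 * (R + 1)).trans_le (hwj' j))),
      mul_log_sub_sum_log_one_add_div_eq c
        (fun j => (by linarith : (1 : ℝ) < 2 * (R + 1)).trans_le (hwj j)) n,
      ← exp_add]
    congr 1
    ring
  calc ‖Gamma (w + 1 + c) / Gamma (w + 1) / w ^ c - 1‖ ≤ 2 * B :=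
        le_of_tendsto (hexpS.sub_const 1).norm (Eventually.of_forall fun n =>
          (norm_exp_sub_one_le ((hS n).trans hB)).trans (by linarith [hS n]))
    _ = 4 * (R + 1) ^ 2 / (δ ^ 2 * ‖w‖) := by ring

lemma norm_ofReal_cpow_mul_Gamma_div_Gamma_sub_cpow_le {u c : ℂ} (hu : u ∈ slitPlane) {h R : ℝ}
    (hh : 0 < h) (hc : ‖c‖ ≤ R) (hhR : 2 * (R + 1) ^ 2 * h ≤ Real.cos (arg u / 2) ^ 2 * ‖u‖) :
    ‖(h : ℂ) ^ c * Gamma (u / h + 1 + c) / Gamma (u / h + 1) - u ^ c‖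
      ≤ Real.exp (‖log u‖ * R) * (4 * (R + 1) ^ 2 / (Real.cos (arg u / 2) ^ 2 * ‖u‖)) * h := by
  set δ := Real.cos (arg u / 2)
  have hu0 := slitPlane_ne_zero hu
  have hnorm : ‖u / h‖ = ‖u‖ / h := by rw [norm_div, norm_real, Real.norm_of_nonneg hh.le]
  have hsector (t : ℝ) (_ : 0 ≤ t) : δ * (‖u / h‖ + t) ≤ ‖u / h + t‖ := by
    simpa [arg_div_ofReal u hh] using cos_arg_div_two_mul_le_norm_add_ofReal (u / h) t
  have hG := norm_Gamma_add_div_Gamma_div_cpow_sub_one_le (cos_arg_div_two_pos hu) hsector hc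
    (by rw [hnorm, mul_div_assoc', le_div_iff₀ hh]; exact hhR)
  have hM : ‖u ^ c‖ ≤ Real.exp (‖log u‖ * R) := by
    rw [cpow_def_of_ne_zero hu0, norm_exp, Real.exp_le_exp]
    exact (re_le_norm _).trans (by rw [norm_mul]; gcongr)
  have hF : (h : ℂ) ^ c * Gamma (u / h + 1 + c) / Gamma (u / h + 1) - u ^ c
      = u ^ c * (Gamma (u / h + 1 + c) / Gamma (u / h + 1) / (u / h) ^ c - 1) := by
    have huc : u ^ c ≠ 0 := cpow_ne_zero_iff.mpr (Or.inl hu0)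
    rw [div_ofReal_cpow hu0 hh]
    field_simp
  rw [hF, norm_mul]
  calc ‖u ^ c‖ * ‖Gamma (u / h + 1 + c) / Gamma (u / h + 1) / (u / h) ^ c - 1‖
      ≤ Real.exp (‖log u‖ * R) * (4 * (R + 1) ^ 2 / (δ ^ 2 * (‖u‖ / h))) :=
        mul_le_mul hM (hnorm ▸ hG) (norm_nonneg _) (Real.exp_pos _).le
    _ = Real.exp (‖log u‖ * R) * (4 * (R + 1) ^ 2 / (δ ^ 2 * ‖u‖)) * h := by
        field_simp

end Complex

/-- For `x` off the closed positive real axis, the characters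
`e_c^{(h)+}(x) = h^c Γ(1 + c - x/h)/Γ(1 - x/h)` converge to `(-x)^c` as `h → 0⁺`,
uniformly for `c` in closed disks. -/
theorem character_confluence_minus (x : ℂ) (hx : -x ∈ Complex.slitPlane) (r : ℝ) :
    TendstoUniformlyOn
      (fun (h : ℝ) (c : ℂ) =>
        (h : ℂ) ^ c * Complex.Gamma (1 + c - x / h) / Complex.Gamma (1 - x / h))
      (fun c : ℂ => (-x) ^ c)
      (nhdsWithin (0 : ℝ) (Set.Ioi 0))
      (Metric.closedBall (0 : ℂ) r) := by
  set δ := Real.cos (Complex.arg (-x) / 2)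
  set K := Real.exp (‖Complex.log (-x)‖ * r) * (4 * (r + 1) ^ 2 / (δ ^ 2 * ‖-x‖))
  have hpos : 0 < δ ^ 2 * ‖-x‖ := by
    have := Complex.cos_arg_div_two_pos hx
    have := norm_pos_iff.mpr (Complex.slitPlane_ne_zero hx)
    positivity
  have hsmall : ∀ᶠ h in 𝓝[>] (0 : ℝ), 2 * (r + 1) ^ 2 * h ≤ δ ^ 2 * ‖-x‖ :=
    nhdsWithin_le_nhds <| ((continuous_const_mul _).tendsto 0).eventually
      (ge_mem_nhds (by simpa using hpos))
  refine tendstoUniformlyOn_of_eventually_dist_le (b := fun h => K * h)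
    (((continuous_const_mul K).tendsto' 0 0 (mul_zero K)).mono_left nhdsWithin_le_nhds) ?_
  filter_upwards [self_mem_nhdsWithin, hsmall] with h (hh : 0 < h) hhr c hc
  rw [dist_comm, dist_eq_norm, show 1 + c - x / h = -x / h + 1 + c by ring,
    show 1 - x / h = -x / h + 1 by ring]
  exact Complex.norm_ofReal_cpow_mul_Gamma_div_Gamma_sub_cpow_le hx hh
    (mem_closedBall_zero_iff.mp hc) hhr
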